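/- Let H be a λ-intersecting k-uniform hypergraph, let e be an edge, and let A ⊆ V(H) be a set of vertices with |e ∩ A| < λ such that every vertex outside A has degree less than D. Then |E(H)| ≤ D·(k − |e ∩ A|)/(λ − |e ∩ A|). -/

import Mathlib

/-!
Every edge `f` meets `e` in at least `λ` vertices (in `λ` if `f ≠ e`, in `k ≥ λ` if `f = e`),
at most `|e ∩ A|` of which lie in `A`, so `f` meets `e \ A` in at least `λ - |e ∩ A|` vertices.
Counting incidences between the edges and the `k - |e ∩ A|` vertices of `e \ A`, each of degree
less than `D`, gives `|E(H)| (λ - |e ∩ A|) ≤ D (k - |e ∩ A|)`.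
-/

open Finset

namespace Finset

variable {α : Type*} [DecidableEq α]

lemma card_inter_le_card_sdiff_inter_add_card_inter (e f A : Finset α) :
    #(e ∩ f) ≤ #((e \ A) ∩ f) + #(e ∩ A) := by
  refine (card_le_card fun v hv => ?_).trans (card_union_le _ _)
  simp only [mem_union, mem_inter, mem_sdiff] at hv ⊢
  tauto

lemma card_mul_le_card_mul_of_le_card_inter {s : Finset α} {B : Finset (Finset α)} {m n : ℕ}
    (hB : ∀ t ∈ B, m ≤ #(s ∩ t)) (hs : ∀ a ∈ s, #{b ∈ B | a ∈ b} ≤ n) :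
    #B * m ≤ #s * n :=
  calc #B * m = ∑ _t ∈ B, m := by rw [sum_const, smul_eq_mul]
    _ ≤ ∑ t ∈ B, #(s ∩ t) := sum_le_sum hB
    _ ≤ #s * n := sum_card_inter_le hs

end Finset

lemma le_card_sdiff_inter_of_intersecting {V : Type*} [DecidableEq V] {k lam : ℕ}
    {H : Finset (Finset V)} (hlt : lam < k)
    (hunif : ∀ e ∈ H, e.card = k)
    (hint : ∀ e ∈ H, ∀ f ∈ H, e ≠ f → (e ∩ f).card = lam)
    {e f : Finset V} (he : e ∈ H) (hf : f ∈ H) (A : Finset V) :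
    lam - #(e ∩ A) ≤ #((e \ A) ∩ f) := by
  have hmeet : lam ≤ #(e ∩ f) := by
    obtain rfl | hne := eq_or_ne e f
    · rw [inter_self, hunif e he]
      exact hlt.le
    · exact (hint e he f hf hne).ge
  have := card_inter_le_card_sdiff_inter_add_card_inter e f A
  omega

theorem edge_bound_small_trace_general {V : Type*} [DecidableEq V]
    (k lam D : ℕ) (hlt : lam < k)
    (H : Finset (Finset V))
    (hunif : ∀ e ∈ H, e.card = k)
    (hint : ∀ e ∈ H, ∀ f ∈ H, e ≠ f → (e ∩ f).card = lam)
    (e : Finset V) (he : e ∈ H) (A : Finset V)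
    (ha : (e ∩ A).card < lam)
    (hD : ∀ v : V, v ∉ A → (H.filter (fun f => v ∈ f)).card < D) :
    (H.card : ℝ) ≤ (D : ℝ) * ((k : ℝ) - ((e ∩ A).card : ℝ)) /
      ((lam : ℝ) - ((e ∩ A).card : ℝ)) := by
  have htrace : #(e ∩ A) ≤ k := hunif e he ▸ card_le_card inter_subset_left
  have hsdiff : #(e \ A) = k - #(e ∩ A) := by
    rw [card_sdiff, inter_comm, hunif e he]
  have hcount : #H * (lam - #(e ∩ A)) ≤ #(e \ A) * D :=
    card_mul_le_card_mul_of_le_card_inter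
      (fun f hf => le_card_sdiff_inter_of_intersecting hlt hunif hint he hf A)
      (fun v hv => (hD v (mem_sdiff.mp hv).2).le)
  rw [hsdiff] at hcount
  rw [le_div_iff₀ (sub_pos.mpr (by exact_mod_cast ha))]
  have : ((#H * (lam - #(e ∩ A)) : ℕ) : ℝ) ≤ (((k - #(e ∩ A)) * D : ℕ) : ℝ) := by
    exact_mod_cast hcount
  push_cast [Nat.cast_sub ha.le, Nat.cast_sub htrace] at this
  linarith

/-- In a λ-intersecting k-uniform hypergraph, if an edge e satisfies |e ∩ A| < λ and
every vertex outside A has degree less than D, then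
|E(H)| ≤ D(k − |e ∩ A|)/(λ − |e ∩ A|). -/
theorem edge_bound_small_trace {V : Type*} [Fintype V] [DecidableEq V]
    (k lam D : ℕ) (hlam : 1 ≤ lam) (hlt : lam < k)
    (H : Finset (Finset V))
    (hunif : ∀ e ∈ H, e.card = k)
    (hint : ∀ e ∈ H, ∀ f ∈ H, e ≠ f → (e ∩ f).card = lam)
    (e : Finset V) (he : e ∈ H) (A : Finset V)
    (ha : (e ∩ A).card < lam)
    (hD : ∀ v : V, v ∉ A → (H.filter (fun f => v ∈ f)).card < D) :
    (H.card : ℝ) ≤ (D : ℝ) * ((k : ℝ) - ((e ∩ A).card : ℝ)) /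
      ((lam : ℝ) - ((e ∩ A).card : ℝ)) :=
  edge_bound_small_trace_general k lam D hlt H hunif hint e he A ha hD
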